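/- arXiv:2006.12702 — 3 statements merged into one kernel-verified Lean document; each statement's English description precedes it below -/
import Mathlib

section
/- Let f : X → Y be a continuous bijection of topological spaces, where Y is Hausdorff and carries a continuous action of a finite group G, and X carries a continuous G-action making f equivariant. If f sends G-invariant open subsets of X to open subsets of Y, then f is an open map, hence a homeomorphism. -/
/-!
Fix `x ∈ U` with `U` open and put `y = f x`. Since `G` is finite and `Y` is Hausdorff, `y` has an
open neighbourhood `W` disjoint from `g • W` whenever `g • y ≠ y`. The points `v ∈ f⁻¹ W` with
`g • v ∈ U` for every `g` fixing `y` form an open set `V ∋ x` (injectivity of `f` makes the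
stabiliser of `y` fix `x`), so `f (G • V) ∩ W` is an open neighbourhood of `y`. It lies in `f U`:
a point `f (g • v) = g • f v` of it lies in `W ∩ g • W`, so `g` fixes `y` and `g • v ∈ U`.
-/

open scoped Pointwise

open Set Filter Topology

section SmulDisjoint

variable {G Y : Type*} [Group G] [TopologicalSpace Y] [T2Space Y] [MulAction G Y]
  [ContinuousConstSMul G Y]

theorem exists_mem_nhds_disjoint_smul_of_smul_ne {y : Y} {g : G} (hg : g • y ≠ y) :
    ∃ s ∈ 𝓝 y, Disjoint s (g • s) := by
  obtain ⟨s, hs, t, ht, hst⟩ := Filter.disjoint_iff.1 (disjoint_nhds_nhds.2 hg.symm)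
  have ht' : (g • ·) ⁻¹' t ∈ 𝓝 y := (continuous_const_smul g).continuousAt ht
  refine ⟨s ∩ (g • ·) ⁻¹' t, inter_mem hs ht', hst.mono inter_subset_left ?_⟩
  rintro _ ⟨z, hz, rfl⟩
  exact hz.2

theorem exists_isOpen_mem_forall_disjoint_smul [Finite G] (y : Y) :
    ∃ U : Set Y, IsOpen U ∧ y ∈ U ∧ ∀ g : G, g • y ≠ y → Disjoint U (g • U) := by
  have : ∀ g : G, ∃ s ∈ 𝓝 y, g • y ≠ y → Disjoint s (g • s) := fun g ↦ by
    by_cases hg : g • y = y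
    · exact ⟨univ, univ_mem, (absurd hg ·)⟩
    · obtain ⟨s, hs, hd⟩ := exists_mem_nhds_disjoint_smul_of_smul_ne hg
      exact ⟨s, hs, fun _ ↦ hd⟩
  choose s hs hd using this
  obtain ⟨U, hUs, hU, hyU⟩ := mem_nhds_iff.1 (iInter_mem.2 hs)
  refine ⟨U, hU, hyU, fun g hg ↦ (hd g hg).mono ?_ (smul_set_mono ?_)⟩ <;>
    exact hUs.trans (iInter_subset s g)

end SmulDisjoint

theorem smul_univ_smul_set {G X : Type*} [Group G] [MulAction G X] (g : G) (V : Set X) :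
    g • ((univ : Set G) • V) = (univ : Set G) • V := by
  rw [← smul_assoc, smul_set_univ]

theorem isOpenMap_of_isOpen_image_of_smul_eq_self {G X Y : Type*} [Group G] [Finite G]
    [TopologicalSpace X] [TopologicalSpace Y] [T2Space Y]
    [MulAction G X] [ContinuousConstSMul G X] [MulAction G Y] [ContinuousConstSMul G Y]
    {f : X → Y} (hc : Continuous f) (hinj : Function.Injective f)
    (heq : ∀ (g : G) (x : X), f (g • x) = g • f x)
    (hop : ∀ U : Set X, IsOpen U → (∀ g : G, g • U = U) → IsOpen (f '' U)) :
    IsOpenMap f := by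
  intro U hU
  refine isOpen_iff_mem_nhds.2 ?_
  rintro _ ⟨x, hxU, rfl⟩
  obtain ⟨W, hW, hxW, hWd⟩ := exists_isOpen_mem_forall_disjoint_smul (G := G) (f x)
  set V : Set X := f ⁻¹' W ∩ ⋂ (g : G) (_ : g • f x = f x), (g • ·) ⁻¹' U
  have hV : IsOpen V := (hW.preimage hc).inter <|
    isOpen_iInter_of_finite fun g ↦ isOpen_iInter_of_finite fun _ ↦
      hU.preimage (continuous_const_smul g)
  have hxV : x ∈ V := by
    refine ⟨hxW, mem_iInter₂.2 fun g hg ↦ ?_⟩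
    have hgx : g • x = x := hinj (by rw [heq, hg])
    simpa [hgx] using hxU
  set O : Set X := (univ : Set G) • V
  have hO : IsOpen (f '' O) := hop O hV.smul_left fun g ↦ smul_univ_smul_set g V
  have hxO : x ∈ O := ⟨1, mem_univ _, x, hxV, one_smul G x⟩
  refine mem_of_superset ((hO.inter hW).mem_nhds ⟨mem_image_of_mem f hxO, hxW⟩) ?_
  rintro _ ⟨⟨_, ⟨g, -, v, ⟨hvW, hvU⟩, rfl⟩, rfl⟩, hgvW⟩
  have hg : g • f x = f x := by
    by_contra hg
    refine (hWd g hg).ne_of_mem hgvW ?_ rfl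
    rw [heq]
    exact smul_mem_smul_set hvW
  exact ⟨g • v, mem_iInter₂.1 hvU g hg, rfl⟩

/-- A continuous equivariant bijection f : X → Y (Y Hausdorff, G finite)
which sends G-invariant open sets to open sets is an open map, hence a homeomorphism. -/
theorem stmt4 {G X Y : Type*} [Group G] [Finite G]
    [TopologicalSpace X] [TopologicalSpace Y] [T2Space Y]
    [MulAction G X] [ContinuousConstSMul G X]
    [MulAction G Y] [ContinuousConstSMul G Y]
    (f : X → Y) (hc : Continuous f) (hb : Function.Bijective f)
    (heq : ∀ (g : G) (x : X), f (g • x) = g • f x)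
    (hop : ∀ U : Set X, IsOpen U → (∀ g : G, g • U = U) → IsOpen (f '' U)) :
    IsOpenMap f ∧ IsHomeomorph f := by
  have hopen := isOpenMap_of_isOpen_image_of_smul_eq_self hc hb.injective heq hop
  exact ⟨hopen, hc, hopen, hb⟩
end

section
/- Let X₀ ↪ X₁ ↪ X₂ ↪ ⋯ be a sequence of closed inclusions of Hausdorff topological spaces such that each inclusion X_i ↪ X_{i+1} is a mapping cylinder inclusion (i.e., factors as X_i ↪ X_i ∪_A (A × ℝ_{≥0}) ↪ X_{i+1} with the second map an open inclusion, for some map A → X_i). Then the colimit X = colim_i X_i (in topological spaces) is Hausdorff. -/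
/-!
An open set `U` of `X` extends to the mapping cylinder `X ∪_A (A × ℝ_{≥0})` of `g : A → X`
by flowing it along the rays, i.e. by taking its preimage under the projection onto `X`; pushed
forward along the open inclusion into `Y`, this is an open set of `Y` that meets `X` in `U`, and
disjoint sets stay disjoint. Two points of the colimit already live in a common stage `X_n`,
where they have disjoint neighbourhoods; extending these stage by stage (and pulling them back
to the earlier stages) gives two compatible families of disjoint open sets, i.e. two disjoint
open sets of the colimit.
-/

open CategoryTheory CategoryTheory.Limits

/-- The relation defining the half-infinite mapping cylinder of `g : A → X`:
glue `A × {0}` to `X` along `g`. -/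
def CylRel {A X : Type} (g : A → X) :
    (X ⊕ A × {r : ℝ // 0 ≤ r}) → (X ⊕ A × {r : ℝ // 0 ≤ r}) → Prop :=
  fun p q => ∃ a : A, p = Sum.inl (g a) ∧ q = Sum.inr (a, ⟨0, le_refl 0⟩)

/-- The open half-infinite mapping cylinder `X ∪_A (A × ℝ_{≥0})` of `g : A → X`. -/
def Cyl {A X : Type} (g : A → X) : Type := Quot (CylRel g)

instance {A X : Type} [TopologicalSpace A] [TopologicalSpace X] (g : A → X) :
    TopologicalSpace (Cyl g) :=
  instTopologicalSpaceQuot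

def cylIncl {A X : Type} (g : A → X) : X → Cyl g := fun x => Quot.mk _ (Sum.inl x)

open Set Function Topology

universe u

structure DisjointOpenExtension {X Y : Type*} [TopologicalSpace X] [TopologicalSpace Y]
    (f : X → Y) where
  extend : Set X → Set Y
  isOpen_extend {U : Set X} : IsOpen U → IsOpen (extend U)
  preimage_extend (U : Set X) : f ⁻¹' extend U = U
  disjoint_extend {U V : Set X} : Disjoint U V → Disjoint (extend U) (extend V)

namespace DisjointOpenExtension

variable {X W Y : Type*} [TopologicalSpace X] [TopologicalSpace W] [TopologicalSpace Y]

def ofRetract {f : X → Y} {s : X → W} {r : W → X} {j : W → Y} (hr : Continuous r)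
    (hrs : LeftInverse r s) (hj : IsOpenEmbedding j) (hf : ∀ x, j (s x) = f x) :
    DisjointOpenExtension f where
  extend U := j '' (r ⁻¹' U)
  isOpen_extend hU := hj.isOpenMap _ (hU.preimage hr)
  preimage_extend U := by
    ext x
    simp [← hf, hj.injective.mem_set_image, hrs x]
  disjoint_extend hUV := (disjoint_image_iff hj.injective).2 (hUV.preimage r)

end DisjointOpenExtension

section Cylinder

variable {A X : Type} (g : A → X)

def cylProj : Cyl g → X :=
  Quot.lift (Sum.elim id (g ∘ Prod.fst)) (by rintro _ _ ⟨a, rfl, rfl⟩; rfl)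

lemma cylProj_cylIncl : LeftInverse (cylProj g) (cylIncl g) := fun _ => rfl

variable [TopologicalSpace A] [TopologicalSpace X] {g}

lemma continuous_cylProj (hg : Continuous g) : Continuous (cylProj g) :=
  continuous_quot_lift _ (continuous_id.sumElim (hg.comp continuous_fst))

def DisjointOpenExtension.ofCyl {Y : Type*} [TopologicalSpace Y] (hg : Continuous g)
    {j : Cyl g → Y} (hj : IsOpenEmbedding j) {f : X → Y} (hf : ∀ x, j (cylIncl g x) = f x) :
    DisjointOpenExtension f :=
  ofRetract (continuous_cylProj hg) (cylProj_cylIncl g) hj hf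

end Cylinder

section Sequence

variable {F : ℕ ⥤ TopCat.{u}}

lemma preimage_map_eq_of_preimage_map_succ (G : ∀ m, Set (F.obj m))
    (hG : ∀ m, F.map (homOfLE (Nat.le_succ m)) ⁻¹' G (m + 1) = G m) {m k : ℕ} (f : m ⟶ k) :
    F.map f ⁻¹' G k = G m := by
  rw [Subsingleton.elim f (homOfLE (leOfHom f))]
  induction k, leOfHom f using Nat.le_induction with
  | base => simp
  | succ k hmk ih =>
    rw [← ih (homOfLE hmk), ← hG k]
    simp [← preimage_comp, ← TopCat.coe_comp, ← F.map_comp]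

namespace DisjointOpenExtension

variable (E : ∀ m, DisjointOpenExtension (F.map (homOfLE (Nat.le_succ m)))) {n : ℕ}

def extendFrom (U : Set (F.obj n)) : ∀ m, Set (F.obj m)
  | 0 => F.map (homOfLE (Nat.zero_le n)) ⁻¹' U
  | m + 1 => if h : m + 1 ≤ n then F.map (homOfLE h) ⁻¹' U else (E m).extend (extendFrom U m)

lemma extendFrom_of_le (U : Set (F.obj n)) {m : ℕ} (h : m ≤ n) :
    extendFrom E U m = F.map (homOfLE h) ⁻¹' U := by
  cases m <;> simp [extendFrom, h]

lemma extendFrom_self (U : Set (F.obj n)) : extendFrom E U n = U := by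
  simp [extendFrom_of_le E U le_rfl]

lemma extendFrom_succ_of_le (U : Set (F.obj n)) {m : ℕ} (h : n ≤ m) :
    extendFrom E U (m + 1) = (E m).extend (extendFrom E U m) :=
  dif_neg (by omega)

lemma preimage_extendFrom_succ (U : Set (F.obj n)) (m : ℕ) :
    F.map (homOfLE (Nat.le_succ m)) ⁻¹' extendFrom E U (m + 1) = extendFrom E U m := by
  by_cases h : m + 1 ≤ n
  · rw [extendFrom_of_le E U h, extendFrom_of_le E U (by omega)]
    simp [← preimage_comp, ← TopCat.coe_comp, ← F.map_comp]
  · rw [extendFrom_succ_of_le E U (by omega), (E m).preimage_extend]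

lemma isOpen_extendFrom {U : Set (F.obj n)} (hU : IsOpen U) (m : ℕ) :
    IsOpen (extendFrom E U m) := by
  induction m with
  | zero => exact hU.preimage (F.map _).hom.continuous
  | succ m ih =>
    by_cases h : m + 1 ≤ n
    · rw [extendFrom_of_le E U h]; exact hU.preimage (F.map _).hom.continuous
    · rw [extendFrom_succ_of_le E U (by omega)]; exact (E m).isOpen_extend ih

lemma disjoint_extendFrom {U V : Set (F.obj n)} (hUV : Disjoint U V) (m : ℕ) :
    Disjoint (extendFrom E U m) (extendFrom E V m) := by
  induction m with
  | zero => exact hUV.preimage _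
  | succ m ih =>
    by_cases h : m + 1 ≤ n
    · rw [extendFrom_of_le E U h, extendFrom_of_le E V h]; exact hUV.preimage _
    · rw [extendFrom_succ_of_le E U (by omega), extendFrom_succ_of_le E V (by omega)]
      exact (E m).disjoint_extend ih

end DisjointOpenExtension

end Sequence

section FilteredColimit

variable {J : Type*} [SmallCategory J] [IsFiltered J] (F : J ⥤ TopCat.{u}) [HasColimit F]

lemma exists_colimit_ι_eq_pair (x y : ↑(colimit F)) :
    ∃ (j : J) (a b : F.obj j), colimit.ι F j a = x ∧ colimit.ι F j b = y := by
  obtain ⟨i, a, rfl⟩ := Concrete.colimit_exists_rep F x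
  obtain ⟨j, f, b, rfl⟩ := Concrete.exists_hom_ι_eq_of_isColimit F (colimit.isColimit F) y i
  exact ⟨j, F.map f a, b, by rw [← ConcreteCategory.comp_apply, colimit.w], rfl⟩

lemma preimage_colimit_ι_iUnion_image (G : ∀ j, Set (F.obj j))
    (hG : ∀ ⦃i j : J⦄ (f : i ⟶ j), F.map f ⁻¹' G j = G i) (k : J) :
    colimit.ι F k ⁻¹' ⋃ j, colimit.ι F j '' G j = G k := by
  ext z
  simp only [mem_preimage, mem_iUnion, mem_image]
  constructor
  · rintro ⟨j, w, hw, he⟩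
    obtain ⟨l, f, f', hff'⟩ := Concrete.colimit_exists_of_rep_eq F w z he
    rw [← hG f', mem_preimage, ← hff', ← mem_preimage, hG f]
    exact hw
  · exact fun hz => ⟨k, z, hz, rfl⟩

end FilteredColimit

open DisjointOpenExtension in
theorem t2Space_colimit_of_disjointOpenExtension (F : ℕ ⥤ TopCat.{u}) [∀ n, T2Space (F.obj n)]
    (E : ∀ m, DisjointOpenExtension (F.map (homOfLE (Nat.le_succ m)))) :
    T2Space ↑(colimit F) := by
  refine ⟨fun x y hxy => ?_⟩
  obtain ⟨n, a, b, rfl, rfl⟩ := exists_colimit_ι_eq_pair F x y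
  obtain ⟨U, V, hU, hV, haU, hbV, hUV⟩ := t2_separation (ne_of_apply_ne _ hxy)
  have preimage_ι : ∀ (W : Set (F.obj n)) (m : ℕ),
      colimit.ι F m ⁻¹' ⋃ k, colimit.ι F k '' extendFrom E W k = extendFrom E W m :=
    fun W => preimage_colimit_ι_iUnion_image F _
      (fun _ _ => preimage_map_eq_of_preimage_map_succ _ (preimage_extendFrom_succ E W))
  refine ⟨⋃ k, colimit.ι F k '' extendFrom E U k, ⋃ k, colimit.ι F k '' extendFrom E V k,
    ?_, ?_, ?_, ?_, ?_⟩
  · exact (TopCat.colimit_isOpen_iff F _).2 fun m => preimage_ι U m ▸ isOpen_extendFrom E hU m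
  · exact (TopCat.colimit_isOpen_iff F _).2 fun m => preimage_ι V m ▸ isOpen_extendFrom E hV m
  · exact mem_iUnion.2 ⟨n, a, (extendFrom_self E U).symm ▸ haU, rfl⟩
  · exact mem_iUnion.2 ⟨n, b, (extendFrom_self E V).symm ▸ hbV, rfl⟩
  · refine disjoint_iUnion_left.2 fun m => disjoint_image_left.2 ?_
    rw [preimage_ι V m]
    exact disjoint_extendFrom E hUV m

theorem stmt10_general (F : ℕ ⥤ TopCat.{0})
    (hT2 : ∀ i : ℕ, T2Space (F.obj i))
    (hcyl : ∀ i : ℕ, ∃ (A : Type) (_ : TopologicalSpace A) (g : A → F.obj i),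
      Continuous g ∧ ∃ j : Cyl g → F.obj (i + 1), Continuous j ∧
        Topology.IsOpenEmbedding j ∧
        ∀ x : F.obj i, j (cylIncl g x) = F.map (homOfLE (Nat.le_succ i)) x) :
    T2Space ↥(colimit F) := by
  have hE : ∀ i, Nonempty (DisjointOpenExtension (F.map (homOfLE (Nat.le_succ i)))) := by
    intro i
    obtain ⟨A, _, g, hg, j, -, hj, hjg⟩ := hcyl i
    exact ⟨.ofCyl hg hj hjg⟩
  exact t2Space_colimit_of_disjointOpenExtension F fun i => (hE i).some

/-- If X₀ ↪ X₁ ↪ ⋯ is a sequence of closed inclusions of Hausdorff spaces,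
each of which is a mapping cylinder inclusion (factoring as X_i ↪ X_i ∪_A (A × ℝ_{≥0}) ↪
X_{i+1} with the second map an open inclusion), then the colimit is Hausdorff. -/
theorem stmt10 (F : ℕ ⥤ TopCat.{0})
    (hT2 : ∀ i : ℕ, T2Space (F.obj i))
    (hclosed : ∀ i : ℕ, Topology.IsClosedEmbedding (F.map (homOfLE (Nat.le_succ i))))
    (hcyl : ∀ i : ℕ, ∃ (A : Type) (_ : TopologicalSpace A) (g : A → F.obj i),
      Continuous g ∧ ∃ j : Cyl g → F.obj (i + 1), Continuous j ∧
        Topology.IsOpenEmbedding j ∧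
        ∀ x : F.obj i, j (cylIncl g x) = F.map (homOfLE (Nat.le_succ i)) x) :
    T2Space ↥(colimit F) :=
  stmt10_general F hT2 hcyl
end

section
/- For each t ∈ [0,1], the map f ↦ f(f*f)^{-t/2} defines a continuous deformation retraction from the space of injective linear maps Inj(ℝⁿ, ℝᵐ) onto the subspace of isometric injections (linear maps f with f*f = id). Moreover this deformation retraction is equivariant under the action of O(n) × O(m) by pre- and post-composition. -/
/-!
Let `S = f* f`. Injectivity of `f` makes `S` positive definite, so `μ ↦ μ ^ (-t/2)` is
continuous and nonvanishing on its spectrum and `S ^ (-t/2)` is an invertible operator; at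
`t = 1`, `S ^ (-1/2) S S ^ (-1/2) = 1` says that `f S ^ (-1/2)` is isometric, and if `f` is
already isometric then `S = 1` is fixed by every power. Replacing `f` by `b f a` conjugates `S`
by the orthogonal map `a`, and the functional calculus commutes with conjugation. For continuity
write `S ^ s = exp (s • log S)`: `log` is continuous on invertible self-adjoint elements.
The operators are transported to matrices by `Matrix.toEuclideanCLM` in order to use the
continuous functional calculus of Hermitian matrices.
-/

open Polynomial Set

theorem Set.Finite.exists_polynomial_eqOn {s : Set ℝ} (hs : s.Finite) (φ : ℝ → ℝ) :
    ∃ q : ℝ[X], s.EqOn φ (fun x ↦ q.eval x) := by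
  classical
  refine ⟨Lagrange.interpolate hs.toFinset id φ, fun x hx ↦ ?_⟩
  simpa using (Lagrange.eval_interpolate_at_node φ (injOn_id _) (hs.mem_toFinset.2 hx)).symm

section ContinuousFunctionalCalculus

variable {A : Type*} {p : A → Prop} [Ring A] [StarRing A] [TopologicalSpace A] [Algebra ℝ A]
  [ContinuousFunctionalCalculus ℝ A p]

/-- On a finite spectrum `cfc φ a` is a polynomial in `a`, which acts on an eigenvector
through its value at the eigenvalue. -/
theorem AlgHom.map_cfc_apply_of_apply_eq_smul {V : Type*} [AddCommGroup V] [Module ℝ V]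
    (ρ : A →ₐ[ℝ] Module.End ℝ V) {a : A} (hfin : (spectrum ℝ a).Finite) (φ : ℝ → ℝ)
    {μ : ℝ} {v : V} (hv : ρ a v = μ • v) (ha : p a := by cfc_tac) :
    ρ (cfc φ a) v = φ μ • v := by
  rcases eq_or_ne v 0 with rfl | hv₀
  · simp
  have hev : (ρ a).HasEigenvector μ v := ⟨Module.End.mem_eigenspace_iff.2 hv, hv₀⟩
  have hμ : μ ∈ spectrum ℝ a :=
    AlgHom.spectrum_apply_subset ρ a (Module.End.hasEigenvalue_of_hasEigenvector hev).mem_spectrum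
  obtain ⟨q, hq⟩ := hfin.exists_polynomial_eqOn φ
  rw [cfc_congr hq, cfc_polynomial q a, ← aeval_algHom_apply,
    Module.End.aeval_apply_of_hasEigenvector hev, hq hμ]

theorem cfc_rpow_neg_half_mul_self_mul {a : A} (ha : spectrum ℝ a ⊆ Ioi 0)
    (ha' : p a := by cfc_tac) :
    cfc (fun x : ℝ ↦ x ^ (-1 / 2 : ℝ)) a * a * cfc (fun x : ℝ ↦ x ^ (-1 / 2 : ℝ)) a = 1 := by
  have hcont : ContinuousOn (fun x : ℝ ↦ x ^ (-1 / 2 : ℝ)) (spectrum ℝ a) := fun x hx ↦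
    (Real.continuousAt_rpow_const x _ (Or.inl (ha hx).ne')).continuousWithinAt
  calc _ = cfc (fun x : ℝ ↦ x ^ (-1 / 2 : ℝ) * x * x ^ (-1 / 2 : ℝ)) a := by
        rw [cfc_mul (fun x : ℝ ↦ x ^ (-1 / 2 : ℝ) * x) _ a (hcont.mul continuousOn_id) hcont,
          cfc_mul _ (fun x : ℝ ↦ x) a hcont continuousOn_id, cfc_id' ℝ a]
    _ = cfc (fun _ ↦ 1) a := cfc_congr fun x hx ↦ by
        rw [mul_comm, ← mul_assoc, ← Real.rpow_add (ha hx),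
          show (-1 / 2 : ℝ) + -1 / 2 = -1 by norm_num, Real.rpow_neg_one, inv_mul_cancel₀ (ha hx).ne']
    _ = 1 := cfc_const_one ℝ a

end ContinuousFunctionalCalculus

theorem cfc_rpow_eq_exp_smul_log {A : Type*} [NormedRing A] [StarRing A] [NormedAlgebra ℝ A]
    [ContinuousFunctionalCalculus ℝ A IsSelfAdjoint] {a : A} (ha : spectrum ℝ a ⊆ Ioi 0) (s : ℝ)
    (ha' : IsSelfAdjoint a := by cfc_tac) :
    cfc (fun x : ℝ ↦ x ^ s) a = NormedSpace.exp (s • CFC.log a) := by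
  have hlog : ContinuousOn Real.log (spectrum ℝ a) :=
    Real.continuousOn_log.mono fun x hx ↦ (ha hx).ne'
  calc cfc (fun x : ℝ ↦ x ^ s) a = cfc (Real.exp ∘ fun x ↦ s * Real.log x) a :=
        cfc_congr fun x hx ↦ by simp [Real.rpow_def_of_pos (ha hx), mul_comm]
    _ = NormedSpace.exp (s • CFC.log a) := by
        rw [cfc_comp _ _ a, CFC.real_exp_eq_normedSpace_exp, cfc_const_mul _ _ a hlog, CFC.log]

theorem ContinuousLinearMap.spectrum_adjoint_comp_self_subset_Ioi {E F : Type*}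
    [NormedAddCommGroup E] [InnerProductSpace ℝ E] [FiniteDimensional ℝ E]
    [NormedAddCommGroup F] [InnerProductSpace ℝ F] [FiniteDimensional ℝ F] {f : E →L[ℝ] F}
    (hf : Function.Injective f) : spectrum ℝ (adjoint f ∘L f) ⊆ Ioi 0 := by
  intro μ hμ
  rw [spectrum_eq, ← Module.End.hasEigenvalue_iff_mem_spectrum] at hμ
  obtain ⟨v, hv⟩ := hμ.exists_hasEigenvector
  have hfv : f v ≠ 0 := fun h ↦ hv.2 (hf (h.trans f.map_zero.symm))
  have key : μ * ‖v‖ ^ 2 = ‖f v‖ ^ 2 := by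
    rw [← real_inner_self_eq_norm_sq, ← real_inner_self_eq_norm_sq, ← real_inner_smul_left,
      ← hv.apply_eq_smul, coe_coe, comp_apply, adjoint_inner_left]
  have : 0 < μ * ‖v‖ ^ 2 := key ▸ by positivity
  exact pos_of_mul_pos_left this (by positivity)

theorem ContinuousLinearMap.adjoint_comp_self_eq_conjStarAlgEquiv {𝕜 E E' F F' : Type*}
    [RCLike 𝕜] [NormedAddCommGroup E] [InnerProductSpace 𝕜 E] [CompleteSpace E]
    [NormedAddCommGroup E'] [InnerProductSpace 𝕜 E'] [CompleteSpace E']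
    [NormedAddCommGroup F] [InnerProductSpace 𝕜 F] [CompleteSpace F]
    [NormedAddCommGroup F'] [InnerProductSpace 𝕜 F'] [CompleteSpace F']
    (a : E' ≃ₗᵢ[𝕜] E) (b : F ≃ₗᵢ[𝕜] F') {f : E →L[𝕜] F} {f' : E' →L[𝕜] F'}
    (h : ∀ v, f' v = b (f (a v))) :
    adjoint f' ∘L f' = a.symm.conjStarAlgEquiv (adjoint f ∘L f) := by
  obtain rfl : f' = (b : F →L[𝕜] F') ∘L f ∘L (a : E' →L[𝕜] E) := ext h
  ext v
  simp [adjoint_comp]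

open ContinuousLinearMap
open scoped Matrix.Norms.L2Operator

local notation "𝒯" => Matrix.toEuclideanCLM (𝕜 := ℝ) (n := Fin _)

variable {n m : ℕ}

noncomputable def gram (f : EuclideanSpace ℝ (Fin n) →L[ℝ] EuclideanSpace ℝ (Fin m)) :
    Matrix (Fin n) (Fin n) ℝ :=
  (𝒯).symm (adjoint f ∘L f)

noncomputable def gramRpow (s : ℝ) (f : EuclideanSpace ℝ (Fin n) →L[ℝ] EuclideanSpace ℝ (Fin m)) :
    EuclideanSpace ℝ (Fin n) →L[ℝ] EuclideanSpace ℝ (Fin n) :=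
  𝒯 (cfc (fun μ : ℝ ↦ μ ^ s) (gram f))

section Gram

variable {f : EuclideanSpace ℝ (Fin n) →L[ℝ] EuclideanSpace ℝ (Fin m)}

variable (f) in
theorem toEuclideanCLM_gram : 𝒯 (gram f) = adjoint f ∘L f :=
  (𝒯).apply_symm_apply _

variable (f) in
theorem isSelfAdjoint_gram : IsSelfAdjoint (gram f) :=
  ((𝒯).symm.map_star' _).symm.trans
    (congrArg (𝒯).symm (isPositive_adjoint_comp_self f).isSelfAdjoint.star_eq)

theorem spectrum_gram_subset_Ioi (hf : Function.Injective f) : spectrum ℝ (gram f) ⊆ Ioi 0 := by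
  rw [gram, AlgEquiv.spectrum_eq (𝒯).symm]
  exact spectrum_adjoint_comp_self_subset_Ioi hf

theorem isUnit_gram (hf : Function.Injective f) : IsUnit (gram f) :=
  spectrum.zero_notMem_iff ℝ |>.1 fun h ↦ lt_irrefl (0 : ℝ) (spectrum_gram_subset_Ioi hf h)

theorem continuous_gram :
    Continuous (gram : (EuclideanSpace ℝ (Fin n) →L[ℝ] EuclideanSpace ℝ (Fin m)) → _) :=
  ((𝒯).symm.toAlgEquiv.toLinearMap.continuous_of_finiteDimensional).comp
    ((adjoint : _ ≃ₗᵢ⋆[ℝ] _).continuous.clm_comp continuous_id)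

end Gram

section GramRpow

variable {f : EuclideanSpace ℝ (Fin n) →L[ℝ] EuclideanSpace ℝ (Fin m)}

theorem gramRpow_apply_of_apply_eq_smul (s : ℝ) {v : EuclideanSpace ℝ (Fin n)} {μ : ℝ}
    (hv : (adjoint f ∘L f) v = μ • v) : gramRpow s f v = μ ^ s • v := by
  rw [← toEuclideanCLM_gram] at hv
  exact (Matrix.toLinAlgEquiv (EuclideanSpace.basisFun (Fin n) ℝ).toBasis).toAlgHom
    |>.map_cfc_apply_of_apply_eq_smul (Matrix.finite_spectrum _) _ hv (isSelfAdjoint_gram f)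

variable (f) in
theorem gramRpow_zero : gramRpow 0 f = 1 := by
  simp [gramRpow, cfc_const_one ℝ (gram f) (isSelfAdjoint_gram f)]

theorem gramRpow_eq_one_of_norm_map (hf : ∀ v, ‖f v‖ = ‖v‖) (s : ℝ) : gramRpow s f = 1 := by
  ext1 v
  rw [gramRpow_apply_of_apply_eq_smul s (μ := 1) (by simp [(norm_map_iff_adjoint_comp_self f).1 hf]),
    Real.one_rpow, one_smul, one_apply_eq_self]

theorem isUnit_gramRpow (hf : Function.Injective f) (s : ℝ) : IsUnit (gramRpow s f) := by
  refine (isUnit_cfc_iff _ _ ?_ (isSelfAdjoint_gram f)).2 (fun μ hμ ↦ ?_) |>.map 𝒯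
  · exact (Matrix.finite_spectrum _).continuousOn _
  · exact (Real.rpow_pos_of_pos (spectrum_gram_subset_Ioi hf hμ) s).ne'

variable (f) in
theorem adjoint_gramRpow (s : ℝ) : adjoint (gramRpow s f) = gramRpow s f :=
  ((𝒯).map_star' _).symm.trans
    (congrArg 𝒯 (cfc_predicate (fun μ : ℝ ↦ μ ^ s) (gram f)).star_eq)

theorem norm_apply_gramRpow_neg_half (hf : Function.Injective f) (v : EuclideanSpace ℝ (Fin n)) :
    ‖f (gramRpow (-1 / 2) f v)‖ = ‖v‖ := by
  refine (norm_map_iff_adjoint_comp_self (f ∘L gramRpow (-1 / 2) f)).2 ?_ v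
  have h := congrArg 𝒯
    (cfc_rpow_neg_half_mul_self_mul (spectrum_gram_subset_Ioi hf) (isSelfAdjoint_gram f))
  rw [map_mul, map_mul, map_one, toEuclideanCLM_gram, mul_def, mul_def] at h
  rw [adjoint_comp, adjoint_gramRpow]
  simpa only [ContinuousLinearMap.comp_assoc, gramRpow] using h

theorem gramRpow_apply_of_eq_comp_comp
    (a : EuclideanSpace ℝ (Fin n) ≃ₗᵢ[ℝ] EuclideanSpace ℝ (Fin n))
    (b : EuclideanSpace ℝ (Fin m) ≃ₗᵢ[ℝ] EuclideanSpace ℝ (Fin m))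
    {f' : EuclideanSpace ℝ (Fin n) →L[ℝ] EuclideanSpace ℝ (Fin m)}
    (h : ∀ v, f' v = b (f (a v))) (s : ℝ) (v : EuclideanSpace ℝ (Fin n)) :
    gramRpow s f' v = a.symm (gramRpow s f (a v)) := by
  let ψ := ((𝒯).trans a.symm.conjStarAlgEquiv).trans (𝒯).symm
  have hψ : Continuous ψ := ψ.toAlgEquiv.toLinearMap.continuous_of_finiteDimensional
  have hgram : gram f' = ψ (gram f) := by
    simp [ψ, gram, adjoint_comp_self_eq_conjStarAlgEquiv a b h]
  rw [gramRpow, hgram, ← StarAlgHomClass.map_cfc ψ _ _ ((Matrix.finite_spectrum _).continuousOn _)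
    hψ (isSelfAdjoint_gram f) (hgram ▸ isSelfAdjoint_gram f')]
  simp [ψ, gramRpow]

theorem Continuous.gramRpow {X : Type*} [TopologicalSpace X]
    {F : X → EuclideanSpace ℝ (Fin n) →L[ℝ] EuclideanSpace ℝ (Fin m)} {s : X → ℝ}
    (hF : Continuous F) (hinj : ∀ x, Function.Injective (F x)) (hs : Continuous s) :
    Continuous fun x ↦ gramRpow (s x) (F x) := by
  have hexp : (fun x ↦ _root_.gramRpow (s x) (F x)) =
      fun x ↦ 𝒯 (NormedSpace.exp (s x • CFC.log (gram (F x)))) :=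
    funext fun x ↦ congrArg 𝒯
      (cfc_rpow_eq_exp_smul_log (spectrum_gram_subset_Ioi (hinj x)) _ (isSelfAdjoint_gram _))
  have hlog : Continuous fun x ↦ CFC.log (gram (F x)) :=
    CFC.continuousOn_log.comp_continuous (continuous_gram.comp hF)
      fun x ↦ ⟨isSelfAdjoint_gram _, isUnit_gram (hinj x)⟩
  -- `NormedSpace.exp_continuous` is stated for normed `ℚ`-algebras.
  let := NormedAlgebra.restrictScalars ℚ ℝ (Matrix (Fin n) (Fin n) ℝ)
  rw [hexp]
  exact ((𝒯).toAlgEquiv.toLinearMap.continuous_of_finiteDimensional).comp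
    (NormedSpace.exp_continuous.comp (hs.smul hlog))

end GramRpow

/-- The maps f ↦ f (f*f)^{-t/2}, t ∈ [0,1], form a continuous deformation
retraction of the space Inj(ℝⁿ, ℝᵐ) of injective linear maps onto the subspace of
isometric injections, fixing the isometric injections, and equivariant under O(n) × O(m)
acting by pre- and post-composition.  The operator (f*f)^{-t/2} is characterized on each
eigenvector of f*f with eigenvalue μ as multiplication by μ^{-t/2}. -/
theorem stmt13 (n m : ℕ) :
    ∃ H : {f : EuclideanSpace ℝ (Fin n) →L[ℝ] EuclideanSpace ℝ (Fin m) //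
          Function.Injective f} × unitInterval →
        (EuclideanSpace ℝ (Fin n) →L[ℝ] EuclideanSpace ℝ (Fin m)),
      Continuous H ∧
      (∀ f t, Function.Injective (H (f, t))) ∧
      (∀ f, H (f, 0) = f.1) ∧
      (∀ f v, ‖H (f, 1) v‖ = ‖v‖) ∧
      (∀ f, (∀ v, ‖f.1 v‖ = ‖v‖) → ∀ t, H (f, t) = f.1) ∧
      (∀ f t, ∃ g : EuclideanSpace ℝ (Fin n) →L[ℝ] EuclideanSpace ℝ (Fin n),
        H (f, t) = f.1.comp g ∧
        ∀ (v : EuclideanSpace ℝ (Fin n)) (μ : ℝ),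
          ((ContinuousLinearMap.adjoint f.1).comp f.1) v = μ • v →
            g v = (μ ^ (-(t : ℝ) / 2)) • v) ∧
      (∀ (a : EuclideanSpace ℝ (Fin n) ≃ₗᵢ[ℝ] EuclideanSpace ℝ (Fin n))
         (b : EuclideanSpace ℝ (Fin m) ≃ₗᵢ[ℝ] EuclideanSpace ℝ (Fin m))
         (f f' : {f : EuclideanSpace ℝ (Fin n) →L[ℝ] EuclideanSpace ℝ (Fin m) //
            Function.Injective f}),
        (∀ v, f'.1 v = b (f.1 (a v))) →
          ∀ t v, H (f', t) v = b (H (f, t) (a v))) := by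
  refine ⟨fun p ↦ p.1.1 ∘L gramRpow (-(p.2 : ℝ) / 2) p.1.1, ?_, fun f t ↦ ?_, fun f ↦ ?_,
    fun f v ↦ ?_, fun f hf t ↦ ?_,
    fun f t ↦ ⟨gramRpow (-(t : ℝ) / 2) f.1, rfl, fun _ _ ↦ gramRpow_apply_of_apply_eq_smul _⟩,
    fun a b f f' h t v ↦ ?_⟩
  · have hf : Continuous fun p : {f : EuclideanSpace ℝ (Fin n) →L[ℝ] EuclideanSpace ℝ (Fin m) //
        Function.Injective f} × unitInterval ↦ p.1.1 := by fun_prop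
    exact hf.clm_comp (hf.gramRpow (fun p ↦ p.1.2) (by fun_prop))
  · exact f.2.comp (isUnit_iff_bijective.1 (isUnit_gramRpow f.2 _)).1
  · simp [gramRpow_zero, one_def]
  · simpa using norm_apply_gramRpow_neg_half f.2 v
  · simp [gramRpow_eq_one_of_norm_map hf, one_def]
  · simp [gramRpow_apply_of_eq_comp_comp a b h, h]
end
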